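/- Let r ≥ 2. For every permutation σ of {1,…,r}, one has Π_{j=1}^{r−1} O_f^{(2)}(X_{σ(j)}, X_{σ(r)}) ≡ Π_{j=1}^{r−1} O_f^{(2)}(X_j, X_r) Mod f(*). Consequently the rank-r Weil operator O_f^{(r)} (the representative of this class with all partial degrees < n) is a symmetric polynomial in X_1,…,X_r. -/

import Mathlib

/-!
Write `O(a, b)` for `O_f^{(2)}(X_a, X_b)`. Telescoping gives `(X_a - X_b) O(a, b) = f(X_a) - f(X_b)`
and `X_a - X_b ∣ O(c, a) - O(c, b)`, hence `O(a, b) O(c, a) ≡ O(a, b) O(c, b) Mod f(*)`. Together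
with the symmetry `O(a, b) = O(b, a)` this moves the centre `c` of `∏_{j ≠ c} O(j, c)` to any other
variable, factor by factor, so the class of this product does not depend on `c`; a permutation
merely relabels the factors and moves the centre.

An element of the ideal with all partial degrees `< deg f` vanishes: as a polynomial in `X_0` over
the quotient by the ideal of the other variables it is divisible by the monic `f` yet has smaller
degree, so its coefficients lie in that smaller ideal, and induction on the number of variables
applies. This gives the symmetry of the reduced representative.
-/

open Finset MvPolynomial

/-- The rank-two Weil operator `O_g^{(2)}(X_a, X_b) = ∑_{j=1}^{deg g} b_j ∑_{α+β=j-1} X_a^α X_b^β`. -/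
noncomputable def weilO2 {F : Type*} [Field F] {σ : Type*} (g : Polynomial F) (a b : σ) :
    MvPolynomial σ F :=
  ∑ j ∈ Finset.range g.natDegree,
    MvPolynomial.C (g.coeff (j + 1)) *
      ∑ pr ∈ Finset.HasAntidiagonal.antidiagonal j, MvPolynomial.X a ^ pr.1 * MvPolynomial.X b ^ pr.2

section Ring

variable {R : Type*} [CommRing R]

-- The ideal of the paper's congruence `Mod f(*)`.
noncomputable def starIdeal (f : Polynomial R) (σ : Type*) : Ideal (MvPolynomial σ R) :=
  Ideal.span (Set.range fun i : σ => Polynomial.aeval (X i : MvPolynomial σ R) f)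

theorem sum_antidiagonal_pow_mul_pow_comm (x y : R) (j : ℕ) :
    ∑ p ∈ antidiagonal j, x ^ p.1 * y ^ p.2 = ∑ p ∈ antidiagonal j, y ^ p.1 * x ^ p.2 := by
  conv_lhs => rw [← HasAntidiagonal.map_swap_antidiagonal, sum_map]
  exact sum_congr rfl fun p _ => mul_comm _ _

theorem sub_mul_sum_antidiagonal_pow_mul_pow (x y : R) (j : ℕ) :
    (x - y) * ∑ p ∈ antidiagonal j, x ^ p.1 * y ^ p.2 = x ^ (j + 1) - y ^ (j + 1) := by
  rw [Nat.sum_antidiagonal_eq_sum_range_succ_mk, mul_comm]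
  simpa using geom_sum₂_mul x y (j + 1)

theorem aeval_X_mem_starIdeal {σ : Type*} (f : Polynomial R) (i : σ) :
    Polynomial.aeval (X i : MvPolynomial σ R) f ∈ starIdeal f σ :=
  Ideal.subset_span ⟨i, rfl⟩

theorem starIdeal_le_iff {σ : Type*} {f : Polynomial R} {I : Ideal (MvPolynomial σ R)} :
    starIdeal f σ ≤ I ↔ ∀ i, Polynomial.aeval (X i : MvPolynomial σ R) f ∈ I := by
  rw [starIdeal, Ideal.span_le, Set.range_subset_iff]
  rfl

theorem rename_mem_starIdeal {σ τ : Type*} (f : Polynomial R) (e : σ → τ)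
    {p : MvPolynomial σ R} (hp : p ∈ starIdeal f σ) : rename e p ∈ starIdeal f τ := by
  have hle : starIdeal f σ ≤ (starIdeal f τ).comap (rename e) := by
    refine starIdeal_le_iff.mpr fun i => ?_
    rw [Ideal.mem_comap, ← Polynomial.aeval_algHom_apply, rename_X]
    exact aeval_X_mem_starIdeal f (e i)
  exact hle hp

theorem map_dvd_map_finSuccEquiv_of_mem_starIdeal (f : Polynomial R) {r : ℕ}
    {g : MvPolynomial (Fin (r + 1)) R} (hg : g ∈ starIdeal f (Fin (r + 1))) :
    f.map (algebraMap R (MvPolynomial (Fin r) R ⧸ starIdeal f (Fin r))) ∣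
      (finSuccEquiv R r g).map (Ideal.Quotient.mk (starIdeal f (Fin r))) := by
  let ψ := (Polynomial.mapAlgHom (Ideal.Quotient.mkₐ R (starIdeal f (Fin r)))).comp
    (finSuccEquiv R r).toAlgHom
  have hle : starIdeal f (Fin (r + 1)) ≤ (Ideal.span
      {f.map (algebraMap R (MvPolynomial (Fin r) R ⧸ starIdeal f (Fin r)))}).comap ψ := by
    refine starIdeal_le_iff.mpr fun i => ?_
    rw [Ideal.mem_comap, ← Polynomial.aeval_algHom_apply]
    induction i using Fin.cases with
    | zero =>
      rw [show ψ (X 0) = Polynomial.X by simp [ψ, finSuccEquiv_X_zero],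
        Polynomial.aeval_X_left_eq_map]
      exact Ideal.subset_span rfl
    | succ j =>
      rw [show ψ (X j.succ) = Polynomial.CAlgHom (R := R) (Ideal.Quotient.mkₐ R _ (X j)) by
          simp [ψ, finSuccEquiv_X_succ],
        Polynomial.aeval_algHom_apply, Polynomial.aeval_algHom_apply, Ideal.Quotient.mkₐ_eq_mk,
        Ideal.Quotient.eq_zero_iff_mem.mpr (aeval_X_mem_starIdeal f j), map_zero]
      exact Ideal.zero_mem _
  obtain ⟨a, ha⟩ := Ideal.mem_span_singleton'.mp (hle hg)
  exact Dvd.intro_left a ha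

theorem eq_zero_of_mem_starIdeal_of_degreeOf_lt {f : Polynomial R} (hf : f.Monic) :
    ∀ {r : ℕ} {g : MvPolynomial (Fin r) R}, g ∈ starIdeal f (Fin r) →
      (∀ v, degreeOf v g < f.natDegree) → g = 0
  | 0, g, hg, _ => by
    rwa [starIdeal, Set.range_eq_empty, Ideal.span_empty, Ideal.mem_bot] at hg
  | r + 1, g, hg, hdeg => by
    have hmod : (finSuccEquiv R r g).map (Ideal.Quotient.mk (starIdeal f (Fin r))) = 0 := by
      nontriviality MvPolynomial (Fin r) R ⧸ starIdeal f (Fin r)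
      by_contra hne
      refine (hf.map _).not_dvd_of_natDegree_lt hne ?_
        (map_dvd_map_finSuccEquiv_of_mem_starIdeal f hg)
      calc _ ≤ (finSuccEquiv R r g).natDegree := Polynomial.natDegree_map_le
        _ = degreeOf 0 g := natDegree_finSuccEquiv g
        _ < f.natDegree := hdeg 0
        _ = _ := (hf.natDegree_map _).symm
    have hcoeff (k : ℕ) : (finSuccEquiv R r g).coeff k = 0 := by
      refine eq_zero_of_mem_starIdeal_of_degreeOf_lt hf ?_ fun v => ?_
      · rw [← Ideal.Quotient.eq_zero_iff_mem, ← Polynomial.coeff_map, hmod, Polynomial.coeff_zero]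
      · exact (degreeOf_coeff_finSuccEquiv g v k).trans_lt (hdeg v.succ)
    exact (map_eq_zero_iff _ (finSuccEquiv R r).injective).mp (Polynomial.ext hcoeff)

end Ring

section Weil

variable {F : Type*} [Field F] {σ : Type*}

theorem weilO2_comm (g : Polynomial F) (a b : σ) : weilO2 g a b = weilO2 g b a := by
  unfold weilO2
  simp_rw [sum_antidiagonal_pow_mul_pow_comm (X a)]

theorem rename_weilO2 {τ : Type*} (g : Polynomial F) (e : σ → τ) (a b : σ) :
    rename e (weilO2 g a b) = weilO2 g (e a) (e b) := by
  simp [weilO2, rename_X]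

theorem X_sub_X_mul_weilO2 (g : Polynomial F) (a b : σ) :
    (X a - X b) * weilO2 g a b =
      Polynomial.aeval (X a : MvPolynomial σ F) g - Polynomial.aeval (X b) g := by
  rw [Polynomial.aeval_eq_sum_range, Polynomial.aeval_eq_sum_range, ← sum_sub_distrib,
    sum_range_succ', pow_zero, pow_zero, sub_self, add_zero, weilO2, mul_sum]
  refine sum_congr rfl fun j _ => ?_
  rw [smul_eq_C_mul, smul_eq_C_mul, mul_left_comm, sub_mul_sum_antidiagonal_pow_mul_pow, mul_sub]

theorem X_sub_X_dvd_weilO2_sub (g : Polynomial F) (a b c : σ) :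
    X a - X b ∣ weilO2 g c a - weilO2 g c b := by
  unfold weilO2
  rw [← sum_sub_distrib]
  refine dvd_sum fun j _ => ?_
  rw [← mul_sub, ← sum_sub_distrib]
  refine (dvd_sum fun p _ => ?_).mul_left _
  rw [← mul_sub]
  exact (sub_dvd_pow_sub_pow _ _ _).mul_left _

theorem weilO2_mul_weilO2_sub_mem_starIdeal (f : Polynomial F) (a b c : σ) :
    weilO2 f a b * weilO2 f c a - weilO2 f a b * weilO2 f c b ∈ starIdeal f σ := by
  obtain ⟨T, hT⟩ := X_sub_X_dvd_weilO2_sub f a b c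
  have hfactor : weilO2 f a b * weilO2 f c a - weilO2 f a b * weilO2 f c b =
      (Polynomial.aeval (X a : MvPolynomial σ F) f - Polynomial.aeval (X b) f) * T := by
    rw [← X_sub_X_mul_weilO2, ← mul_sub, hT]
    ring
  rw [hfactor]
  exact Ideal.mul_mem_right _ _ (sub_mem (aeval_X_mem_starIdeal f a) (aeval_X_mem_starIdeal f b))

end Weil

section Combinatorics

variable {M : Type*} [CommMonoid M]

theorem prod_erase_eq_prod_erase_of_mul_eq {ι : Type*} [Fintype ι] [DecidableEq ι]
    (o : ι → ι → M) (hcomm : ∀ a b, o a b = o b a)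
    (hshift : ∀ a b c, o a b * o c a = o a b * o c b) (k l : ι) :
    ∏ j ∈ univ.erase k, o j k = ∏ j ∈ univ.erase l, o j l := by
  obtain rfl | hkl := eq_or_ne k l
  · rfl
  have hfactor (S : Finset ι) : o k l * ∏ j ∈ S, o j k = o k l * ∏ j ∈ S, o j l := by
    induction S using Finset.induction_on with
    | empty => rfl
    | insert c S hc ih =>
      rw [prod_insert hc, prod_insert hc, ← mul_assoc, hshift, mul_assoc, mul_left_comm, ih,
        mul_left_comm]
  rw [← mul_prod_erase _ _ (mem_erase.mpr ⟨hkl.symm, mem_univ l⟩),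
    ← mul_prod_erase _ _ (mem_erase.mpr ⟨hkl, mem_univ k⟩), hcomm l k, erase_right_comm]
  exact hfactor _

theorem prod_perm_castSucc_eq_prod_erase {m : ℕ} (τ : Equiv.Perm (Fin (m + 1)))
    (g : Fin (m + 1) → M) :
    ∏ j : Fin m, g (τ j.castSucc) = ∏ k ∈ univ.erase (τ (Fin.last m)), g k := by
  have himage : univ.map (Fin.castSuccEmb.trans τ.toEmbedding) = univ.erase (τ (Fin.last m)) := by
    ext k
    simp only [mem_map, mem_univ, true_and, mem_erase, and_true, Function.Embedding.trans_apply,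
      Fin.coe_castSuccEmb, Equiv.coe_toEmbedding]
    constructor
    · rintro ⟨j, rfl⟩ h
      exact (Fin.castSucc_lt_last j).ne (τ.injective h)
    · intro hk
      obtain ⟨j, hj⟩ := Fin.eq_castSucc_of_ne_last (τ.symm_apply_eq.not.mpr hk)
      exact ⟨j, by rw [hj, τ.apply_symm_apply]⟩
  rw [← himage, prod_map]
  rfl

end Combinatorics

theorem prod_weilO2_perm_sub_mem_starIdeal {F : Type*} [Field F] (f : Polynomial F) {m : ℕ}
    (τ : Equiv.Perm (Fin (m + 1))) :
    ∏ j : Fin m, weilO2 f (τ j.castSucc) (τ (Fin.last m)) -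
      ∏ j : Fin m, weilO2 f j.castSucc (Fin.last m) ∈ starIdeal f (Fin (m + 1)) := by
  rw [← Ideal.Quotient.eq, map_prod, map_prod]
  let o : Fin (m + 1) → Fin (m + 1) → MvPolynomial (Fin (m + 1)) F ⧸ starIdeal f (Fin (m + 1)) :=
    fun a b => Ideal.Quotient.mk _ (weilO2 f a b)
  have hcomm (a b) : o a b = o b a := congrArg (Ideal.Quotient.mk _) (weilO2_comm f a b)
  have hshift (a b c) : o a b * o c a = o a b * o c b := by
    simp only [o, ← map_mul]
    exact Ideal.Quotient.eq.mpr (weilO2_mul_weilO2_sub_mem_starIdeal f a b c)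
  calc ∏ j : Fin m, o (τ j.castSucc) (τ (Fin.last m))
      = ∏ k ∈ univ.erase (τ (Fin.last m)), o k (τ (Fin.last m)) :=
        prod_perm_castSucc_eq_prod_erase τ (o · (τ (Fin.last m)))
    _ = ∏ k ∈ univ.erase (Fin.last m), o k (Fin.last m) :=
        prod_erase_eq_prod_erase_of_mul_eq o hcomm hshift _ _
    _ = ∏ j : Fin m, o j.castSucc (Fin.last m) :=
        (prod_perm_castSucc_eq_prod_erase 1 (o · (Fin.last m))).symm

theorem weil_operator_symmetric_general {F : Type*} [Field F]
    (f : Polynomial F) (hf : f.Monic) (n : ℕ) (hn : f.natDegree = n)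
    (m : ℕ) (σ : Equiv.Perm (Fin (m + 1))) :
    ((∏ j : Fin m, weilO2 f (σ (Fin.castSucc j)) (σ (Fin.last m)))
        - (∏ j : Fin m, weilO2 f (Fin.castSucc j) (Fin.last m))
        ∈ Ideal.span (Set.range fun i : Fin (m + 1) =>
            Polynomial.aeval (MvPolynomial.X i : MvPolynomial (Fin (m + 1)) F) f))
    ∧ (∀ Q : MvPolynomial (Fin (m + 1)) F,
        (∀ v : Fin (m + 1), MvPolynomial.degreeOf v Q < n) →
        (Q - (∏ j : Fin m, weilO2 f (Fin.castSucc j) (Fin.last m))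
          ∈ Ideal.span (Set.range fun i : Fin (m + 1) =>
              Polynomial.aeval (MvPolynomial.X i : MvPolynomial (Fin (m + 1)) F) f)) →
        MvPolynomial.rename (⇑σ) Q = Q) := by
  subst hn
  have hcong := prod_weilO2_perm_sub_mem_starIdeal f σ
  refine ⟨hcong, fun Q hQdeg hQ => ?_⟩
  have hrename : rename σ Q - Q ∈ starIdeal f (Fin (m + 1)) := by
    have hσQ := rename_mem_starIdeal f σ hQ
    simp only [map_sub, map_prod, rename_weilO2] at hσQ
    rw [← Ideal.Quotient.eq] at hcong hQ hσQ ⊢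
    exact hσQ.trans (hcong.trans hQ.symm)
  refine sub_eq_zero.mp (eq_zero_of_mem_starIdeal_of_degreeOf_lt hf hrename fun v => ?_)
  have hσdeg : degreeOf v (rename σ Q) = degreeOf (σ.symm v) Q := by
    simpa using degreeOf_rename_of_injective (p := Q) σ.injective (σ.symm v)
  calc degreeOf v (rename σ Q - Q) ≤ max (degreeOf v (rename σ Q)) (degreeOf v Q) :=
        degreeOf_sub_le _ _ _
    _ < f.natDegree := max_lt (hσdeg ▸ hQdeg _) (hQdeg v)

/-- Let `r = m + 1 ≥ 2`.  For every permutation `σ` of `{1,…,r}`,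
`∏_{j=1}^{r-1} O_f^{(2)}(X_{σ(j)}, X_{σ(r)}) ≡ ∏_{j=1}^{r-1} O_f^{(2)}(X_j, X_r) Mod f(*)`.
Consequently the rank-`r` Weil operator `O_f^{(r)}` (any polynomial with all partial degrees
`< n` congruent to this product mod `f(*)`) is a symmetric polynomial in `X_1,…,X_r`. -/
theorem weil_operator_symmetric {F : Type*} [Field F] [Fintype F]
    (f : Polynomial F) (hf : f.Monic) (n : ℕ) (hn : f.natDegree = n) (hn1 : 1 ≤ n)
    (m : ℕ) (hm : 1 ≤ m) (σ : Equiv.Perm (Fin (m + 1))) :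
    ((∏ j : Fin m, weilO2 f (σ (Fin.castSucc j)) (σ (Fin.last m)))
        - (∏ j : Fin m, weilO2 f (Fin.castSucc j) (Fin.last m))
        ∈ Ideal.span (Set.range fun i : Fin (m + 1) =>
            Polynomial.aeval (MvPolynomial.X i : MvPolynomial (Fin (m + 1)) F) f))
    ∧ (∀ Q : MvPolynomial (Fin (m + 1)) F,
        (∀ v : Fin (m + 1), MvPolynomial.degreeOf v Q < n) →
        (Q - (∏ j : Fin m, weilO2 f (Fin.castSucc j) (Fin.last m))
          ∈ Ideal.span (Set.range fun i : Fin (m + 1) =>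
              Polynomial.aeval (MvPolynomial.X i : MvPolynomial (Fin (m + 1)) F) f)) →
        MvPolynomial.rename (⇑σ) Q = Q) :=
  weil_operator_symmetric_general f hf n hn m σ
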